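/- For N ≥ 3, the assignment kᵢ ↦ vᵢwᵢᵀ induces an injective ring homomorphism ℂ[k₁,…,k_N]/I_N → ℂ[v₁,w₁,…,v_N,w_N]/I'_N, where I_N = (k₁+…+k_N, Q₁,…,Q_N) and I'_N = (v₁w₁ᵀ + … + v_Nw_Nᵀ), given that I_N is radical. -/

import Mathlib

/-!
A common zero of `I_N` is a tuple of `2 × 2` matrices `kᵢ` of rank at most one with `∑ kᵢ = 0`;
writing each `kᵢ = vᵢ wᵢᵀ` gives a common zero of `I'_N` lying over it. So a polynomial whose
image lies in `I'_N` vanishes on the zero locus of `I_N`, and by the Nullstellensatz it lies in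
`√I_N = I_N`. Hence `I_N` is exactly the preimage of `I'_N` under `kᵢ ↦ vᵢ wᵢᵀ`.
-/

open MvPolynomial

namespace Stmt15

/-- `ℂ[k₁,…,k_N]`: `X (i, r, c)` is the `(r,c)` entry of `kᵢ`. -/
abbrev A (N : ℕ) := MvPolynomial (Fin N × Fin 2 × Fin 2) ℂ

/-- `ℂ[v₁,w₁,…,v_N,w_N]`: `X (i, false, c)` is `vᵢ c`, `X (i, true, c)` is `wᵢ c`. -/
abbrev B (N : ℕ) := MvPolynomial (Fin N × Bool × Fin 2) ℂ

/-- `I_N = (k₁ + … + k_N, Q₁, …, Q_N)`. -/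
noncomputable def IN (N : ℕ) : Ideal (A N) :=
  Ideal.span
    ((Set.range fun rc : Fin 2 × Fin 2 => ∑ i : Fin N, X (i, rc.1, rc.2)) ∪
     (Set.range fun i : Fin N =>
        X (i, 0, 0) * X (i, 1, 1) - X (i, 0, 1) * X (i, 1, 0)))

/-- `I'_N = (v₁w₁ᵀ + … + v_N w_Nᵀ)`, generated by the four matrix entries. -/
noncomputable def IN' (N : ℕ) : Ideal (B N) :=
  Ideal.span (Set.range fun rc : Fin 2 × Fin 2 =>
    ∑ i : Fin N, X (i, false, rc.1) * X (i, true, rc.2))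

/-- The substitution `kᵢ ↦ vᵢ wᵢᵀ`, entrywise `(kᵢ)_{rc} ↦ (vᵢ)_r (wᵢ)_c`. -/
noncomputable def subst (N : ℕ) : A N →ₐ[ℂ] B N :=
  aeval fun v : Fin N × Fin 2 × Fin 2 => X (v.1, false, v.2.1) * X (v.1, true, v.2.2)

end Stmt15

theorem Matrix.exists_eq_vecMulVec_of_det_eq_zero {K : Type*} [Field K]
    (k : Matrix (Fin 2) (Fin 2) K) (h : k.det = 0) :
    ∃ v w : Fin 2 → K, k = Matrix.vecMulVec v w := by
  by_cases hk : k = 0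
  · exact ⟨0, 0, by simp [hk]⟩
  obtain ⟨a, b, hab⟩ : ∃ a b, k a b ≠ 0 := by
    by_contra! hzero
    exact hk (Matrix.ext hzero)
  refine ⟨fun r => k r b, fun c => k a c / k a b, ?_⟩
  ext r c
  rw [Matrix.vecMulVec_apply, mul_div_assoc', eq_div_iff hab]
  rw [Matrix.det_fin_two] at h
  -- every 2×2 minor of a 2×2 matrix is `0`, `det k` or `-det k`
  fin_cases a <;> fin_cases b <;> fin_cases r <;> fin_cases c <;>
    simp only [Fin.zero_eta, Fin.mk_one] <;>
    first | ring1 | linear_combination h | linear_combination -h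

theorem MvPolynomial.comap_aeval_le_of_zeroLocus_subset_image {σ τ K : Type*} [Field K]
    [IsAlgClosed K] [Finite σ] (f : σ → MvPolynomial τ K) {I : Ideal (MvPolynomial σ K)}
    (hI : I.IsRadical) (J : Ideal (MvPolynomial τ K))
    (h : zeroLocus K I ⊆ (fun y s => aeval y (f s)) '' zeroLocus K J) :
    J.comap (aeval f) ≤ I := by
  intro p hp
  rw [← hI.radical, ← vanishingIdeal_zeroLocus_eq_radical (K := K)]
  intro x hx
  obtain ⟨y, hy, rfl⟩ := h hx
  rw [← aeval_bind₁, ← aeval_eq_bind₁]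
  exact hy _ hp

namespace Stmt15

theorem IN_le_comap_subst (N : ℕ) : IN N ≤ (IN' N).comap (subst N) := by
  rw [IN, Ideal.span_le]
  rintro _ (⟨rc, rfl⟩ | ⟨i, rfl⟩)
  · exact Ideal.subset_span ⟨rc, by simp [subst]⟩
  · have hdet : subst N (X (i, 0, 0) * X (i, 1, 1) - X (i, 0, 1) * X (i, 1, 0)) = 0 := by
      simp only [subst, map_sub, map_mul, aeval_X]
      ring
    exact Ideal.mem_comap.mpr (hdet ▸ (IN' N).zero_mem)

theorem zeroLocus_IN_subset_image (N : ℕ) :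
    zeroLocus ℂ (IN N) ⊆ (fun y (s : Fin N × Fin 2 × Fin 2) =>
      aeval y (X (s.1, false, s.2.1) * X (s.1, true, s.2.2) : B N)) '' zeroLocus ℂ (IN' N) := by
  intro x hx
  rw [IN, zeroLocus_span] at hx
  have hdet : ∀ i, (Matrix.of fun r c => x (i, r, c)).det = 0 := fun i => by
    simpa [Matrix.det_fin_two] using hx _ (Or.inr ⟨i, rfl⟩)
  choose v w hvw using fun i => Matrix.exists_eq_vecMulVec_of_det_eq_zero _ (hdet i)
  have hx_eq : ∀ i r c, x (i, r, c) = v i r * w i c := fun i r c => congr_fun₂ (hvw i) r c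
  let y : Fin N × Bool × Fin 2 → ℂ := fun t => cond t.2.1 (w t.1 t.2.2) (v t.1 t.2.2)
  refine ⟨y, ?_, ?_⟩
  · rw [IN', zeroLocus_span]
    rintro _ ⟨⟨r, c⟩, rfl⟩
    simpa [y, hx_eq] using hx _ (Or.inl ⟨(r, c), rfl⟩)
  · funext ⟨i, r, c⟩
    simp [y, hx_eq]

theorem stmt_15 (N : ℕ) (hrad : (IN N).IsRadical) :
    (∃ φ : A N ⧸ IN N →+* B N ⧸ IN' N,
        ∀ p : A N, φ (Ideal.Quotient.mk (IN N) p) = Ideal.Quotient.mk (IN' N) (subst N p)) ∧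
    (∀ φ : A N ⧸ IN N →+* B N ⧸ IN' N,
        (∀ p : A N, φ (Ideal.Quotient.mk (IN N) p) = Ideal.Quotient.mk (IN' N) (subst N p)) →
        Function.Injective φ) := by
  have hle := IN_le_comap_subst N
  have hker : (IN' N).comap (subst N) ≤ IN N :=
    comap_aeval_le_of_zeroLocus_subset_image _ hrad _ (zeroLocus_IN_subset_image N)
  refine ⟨⟨Ideal.quotientMap (IN' N) (subst N).toRingHom hle, fun _ => rfl⟩, fun φ hφ => ?_⟩
  obtain rfl : φ = Ideal.quotientMap (IN' N) (subst N).toRingHom hle :=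
    Ideal.Quotient.ringHom_ext (RingHom.ext hφ)
  exact Ideal.quotientMap_injective' hker

end Stmt15
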